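/- Let p be a prime with p > 5 and let S be a subset of ZMod p with exactly four elements such that 0, 1, 2 ∈ S (here 0, 1, 2 denote the images in ZMod p of the natural numbers 0, 1, 2). Suppose there exists c' ∈ S with c' ≠ 1 and 2*c' - 1 ∈ S. Then S equals one of the four sets {-1, 0, 1, 2}, {0, 1, 2, 3}, {0, 1, 2, 2⁻¹}, {0, 1, 2, 3*2⁻¹}, where 2⁻¹ denotes the multiplicative inverse of 2 in the field ZMod p. -/

import Mathlib

/-!
Write `S = {0, 1, 2, d}`. The colour `c'` is `0`, `2` or `d`, and in each case the requirement
`2 * c' - 1 ∈ S` pins down `d`: for `c' = 0` it forces `d = -1`, for `c' = 2` it forces `d = 3`,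
and for `c' = d` the equation `2 * d - 1 ∈ {0, 2}` gives `d = 1 / 2` or `d = 3 / 2`.
-/

theorem ZMod.natCast_ne_zero_of_pos_of_lt {p k : ℕ} (hk : 0 < k) (hkp : k < p) :
    (k : ZMod p) ≠ 0 :=
  (ZMod.natCast_eq_zero_iff k p).not.mpr (Nat.not_dvd_of_pos_of_lt hk hkp)

theorem Finset.exists_eq_of_card_eq_four_of_mem {α : Type*} [DecidableEq α] {S : Finset α}
    {a b c : α} (hab : a ≠ b) (hac : a ≠ c) (hbc : b ≠ c) (hcard : S.card = 4)
    (ha : a ∈ S) (hb : b ∈ S) (hc : c ∈ S) : ∃ d, S = {a, b, c, d} := by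
  obtain ⟨d, -, hd⟩ := (Finset.exists_eq_insert_iff (s := {a, b, c}) (t := S)).mpr
    ⟨by simp [Finset.insert_subset_iff, ha, hb, hc], by simp [hab, hac, hbc, hcard]⟩
  exact ⟨d, by rw [← hd, Finset.insert_comm d a, Finset.insert_comm d b, Finset.pair_comm]⟩

theorem fourth_eq_of_two_mul_sub_one_mem {K : Type*} [Field K] (h2 : (2 : K) ≠ 0)
    (h3 : (3 : K) ≠ 0) {c d : K} (hc : c ∈ ({0, 1, 2, d} : Set K)) (hc1 : c ≠ 1)
    (hcc : 2 * c - 1 ∈ ({0, 1, 2, d} : Set K)) :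
    d = -1 ∨ d = 3 ∨ d = 2⁻¹ ∨ d = 3 * 2⁻¹ := by
  have h1 : (1 : K) ≠ 0 := one_ne_zero
  simp only [Set.mem_insert_iff, Set.mem_singleton_iff] at hc hcc
  rcases hc with rfl | rfl | rfl | rfl
  · left
    rcases hcc with h | h | h | h
    · exact absurd (by linear_combination -h) h1
    · exact absurd (by linear_combination -h) h2
    · exact absurd (by linear_combination -h) h3
    · linear_combination -h
  · exact absurd rfl hc1
  · right; left
    rcases hcc with h | h | h | h
    · exact absurd (by linear_combination h) h3
    · exact absurd (by linear_combination h) h2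
    · exact absurd (by linear_combination h) h1
    · linear_combination -h
  · rcases hcc with h | h | h | h
    · exact Or.inr <| Or.inr <| Or.inl <| by field_simp; linear_combination h
    · exact absurd (mul_left_cancel₀ h2 (by linear_combination h : 2 * c = 2 * 1)) hc1
    · exact Or.inr <| Or.inr <| Or.inr <| by field_simp; linear_combination h
    · exact absurd (by linear_combination h) hc1

/-- Second normalization step: a four-element color set containing 0, 1, 2 with a
crossing at an arc colored 1 must be one of four specific sets. -/
theorem fox_four_color_set_classification
    (p : ℕ) (hp : p.Prime) (hp5 : 5 < p) (S : Finset (ZMod p))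
    (hcard : S.card = 4)
    (h0 : (0 : ZMod p) ∈ S) (h1 : (1 : ZMod p) ∈ S) (h2 : (2 : ZMod p) ∈ S)
    (h : ∃ c' ∈ S, c' ≠ 1 ∧ 2 * c' - 1 ∈ S) :
    S = {-1, 0, 1, 2} ∨ S = {0, 1, 2, 3} ∨
    S = {0, 1, 2, (2 : ZMod p)⁻¹} ∨ S = {0, 1, 2, 3 * (2 : ZMod p)⁻¹} := by
  have : Fact p.Prime := ⟨hp⟩
  have two_ne_zero : (2 : ZMod p) ≠ 0 := by
    exact_mod_cast ZMod.natCast_ne_zero_of_pos_of_lt (k := 2) (by norm_num) (by omega)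
  have three_ne_zero : (3 : ZMod p) ≠ 0 := by
    exact_mod_cast ZMod.natCast_ne_zero_of_pos_of_lt (k := 3) (by norm_num) (by omega)
  have two_ne_one : (2 : ZMod p) ≠ 1 := fun h => one_ne_zero (by linear_combination h)
  obtain ⟨d, rfl⟩ := Finset.exists_eq_of_card_eq_four_of_mem zero_ne_one two_ne_zero.symm
    two_ne_one.symm hcard h0 h1 h2
  obtain ⟨c, hc, hc1, hcc⟩ := h
  rcases fourth_eq_of_two_mul_sub_one_mem two_ne_zero three_ne_zero (by simpa using hc) hc1
    (by simpa using hcc) with rfl | rfl | rfl | rfl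
  · left
    rw [Finset.pair_comm, Finset.insert_comm 1, Finset.insert_comm 0]
  all_goals simp only [true_or, or_true]
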